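/- For every integer k with 1 ≤ k ≤ 3, RR(x+y+kz=(k+1)w) = 4; that is, N = 4 is the least positive integer such that every 2-coloring χ : {1,…,N} → {0,1} admits positive integers x,y,z,w ≤ N with χ(x)=χ(y)=χ(z)=χ(w) and x + y + k·z = (k+1)·w. -/

import Mathlib

/-- The set of positive integers `N` such that every 2-coloring of `{1, ..., N}`
admits a monochromatic solution to `x + y + k*z = l*w`. -/
def radoSet (k l : ℕ) : Set ℕ :=
  {N : ℕ | 0 < N ∧ ∀ χ : ℕ → Fin 2, ∃ x y z w : ℕ,
    x ∈ Finset.Icc 1 N ∧ y ∈ Finset.Icc 1 N ∧ z ∈ Finset.Icc 1 N ∧ w ∈ Finset.Icc 1 N ∧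
    χ x = χ y ∧ χ y = χ z ∧ χ z = χ w ∧ x + y + k * z = l * w}

/-!
Both bounds come from small, explicit colourings.

Lower bound: colour `2` alone and `1, 3` together. A solution inside `{1, 3}` would consist of
odd numbers, but then `x + y + k z` and `(k + 1) w` have different parities; and `2` alone
carries no solution since `x + x + k x ≠ (k + 1) x` for `x > 0`.

Upper bound: setting `z = w` turns the equation into Schur's `x + y = w`, so a colouring of
`{1, 2, 3, 4}` without a monochromatic solution avoids monochromatic Schur triples
`1 + 1 = 2`, `2 + 2 = 4`, `1 + 3 = 4`. This forces the colouring `{1, 4} | {2, 3}`, and for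
`k = 1, 2, 3` the class `{2, 3}` contains a solution.
-/

theorem add_add_mul_ne_succ_mul_of_odd {k x y z w : ℕ} (hx : Odd x) (hy : Odd y) (hz : Odd z)
    (hw : Odd w) : x + y + k * z ≠ (k + 1) * w := by
  obtain ⟨a, rfl⟩ := hx
  obtain ⟨b, rfl⟩ := hy
  obtain ⟨c, rfl⟩ := hz
  obtain ⟨d, rfl⟩ := hw
  ring_nf
  omega

theorem add_add_mul_eq_succ_mul_of_add_eq {k x y w : ℕ} (h : x + y = w) :
    x + y + k * w = (k + 1) * w := by
  rw [h]
  ring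

theorem Fin.two_eq_of_ne_of_ne {a b c : Fin 2} (hab : a ≠ b) (hbc : b ≠ c) : a = c := by
  omega

theorem notMem_radoSet_of_le_three (k : ℕ) {N : ℕ} (hN : N ≤ 3) :
    N ∉ radoSet k (k + 1) := by
  rintro ⟨-, h⟩
  obtain ⟨x, y, z, w, hx, hy, hz, hw, hxy, hyz, hzw, heq⟩ :=
    h fun n => if n = 2 then 1 else 0
  simp only [Finset.mem_Icc] at hx hy hz hw
  by_cases hw2 : w = 2
  · simp only [hw2, if_true] at hzw
    have hz2 : z = 2 := by by_contra hz2; simp [hz2] at hzw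
    have hy2 : y = 2 := by by_contra hy2; simp [hy2, hz2] at hyz
    have hx2 : x = 2 := by by_contra hx2; simp [hx2, hy2] at hxy
    subst hx2 hy2 hz2 hw2
    omega
  · have odd_of_ne_two {n : ℕ} (h1 : 1 ≤ n) (h3 : n ≤ 3) (h2 : n ≠ 2) : Odd n :=
      Nat.odd_iff.2 (by omega)
    have hz2 : z ≠ 2 := by rintro rfl; simp [hw2] at hzw
    have hy2 : y ≠ 2 := by rintro rfl; simp [hz2] at hyz
    have hx2 : x ≠ 2 := by rintro rfl; simp [hy2] at hxy
    exact add_add_mul_ne_succ_mul_of_odd (odd_of_ne_two hx.1 (by omega) hx2)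
      (odd_of_ne_two hy.1 (by omega) hy2) (odd_of_ne_two hz.1 (by omega) hz2)
      (odd_of_ne_two hw.1 (by omega) hw2) heq

theorem four_mem_radoSet {k : ℕ} (hk1 : 1 ≤ k) (hk3 : k ≤ 3) : 4 ∈ radoSet k (k + 1) := by
  refine ⟨by norm_num, fun χ => ?_⟩
  by_cases h12 : χ 1 = χ 2
  · exact ⟨1, 1, 2, 2, by decide, by decide, by decide, by decide, rfl, h12, rfl,
      add_add_mul_eq_succ_mul_of_add_eq rfl⟩
  by_cases h24 : χ 2 = χ 4
  · exact ⟨2, 2, 4, 4, by decide, by decide, by decide, by decide, rfl, h24, rfl,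
      add_add_mul_eq_succ_mul_of_add_eq rfl⟩
  have h14 : χ 1 = χ 4 := Fin.two_eq_of_ne_of_ne h12 h24
  by_cases h34 : χ 3 = χ 4
  · exact ⟨1, 3, 4, 4, by decide, by decide, by decide, by decide, h14.trans h34.symm, h34, rfl,
      add_add_mul_eq_succ_mul_of_add_eq rfl⟩
  have h23 : χ 2 = χ 3 := Fin.two_eq_of_ne_of_ne h24 (Ne.symm h34)
  interval_cases k
  · exact ⟨2, 2, 2, 3, by decide, by decide, by decide, by decide, rfl, rfl, h23, rfl⟩
  · exact ⟨2, 3, 2, 3, by decide, by decide, by decide, by decide, h23, h23.symm, h23, rfl⟩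
  · exact ⟨3, 3, 2, 3, by decide, by decide, by decide, by decide, rfl, h23.symm, h23, rfl⟩

/-- For `1 ≤ k ≤ 3`, `RR(x + y + k*z = (k+1)*w) = 4`. -/
theorem RR_k_add_one_small (k : ℕ) (hk1 : 1 ≤ k) (hk3 : k ≤ 3) :
    IsLeast (radoSet k (k + 1)) 4 :=
  ⟨four_mem_radoSet hk1 hk3, fun _ hN =>
    not_lt.1 fun hlt => notMem_radoSet_of_le_three k (Nat.le_of_lt_succ hlt) hN⟩
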